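/- Let A be a simple finite-dimensional algebra over a field F of characteristic zero with a comultiplication Δ such that the Drinfeld double D(A) is a direct sum A₁ ⊕ A₂ of two proper simple ideals, let φ₁, φ₂ : A* → A be the linear maps with f − φᵢ(f) ∈ Aᵢ for all f ∈ A*, and let ψ : A → A* be the linear bijection with a = −φ₁(ψ(a)) + φ₂(ψ(a)) for all a ∈ A. Then the operator Q : A → A defined by Q(a) = φ₂(ψ(a)) is a Rota–Baxter operator of weight −1 on A. -/

import Mathlib

open TensorProduct

/-- `I` is a (two-sided) ideal for the product `prod`. -/
def IsIdealP {F M : Type*} [Field F] [AddCommGroup M] [Module F M]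
    (prod : M → M → M) (I : Submodule F M) : Prop :=
  ∀ x ∈ I, ∀ y : M, prod x y ∈ I ∧ prod y x ∈ I

/-- The ideal `I` is simple as an algebra with the restricted product. -/
def IsSimpleIdealP {F M : Type*} [Field F] [AddCommGroup M] [Module F M]
    (prod : M → M → M) (I : Submodule F M) : Prop :=
  (∃ x ∈ I, ∃ y ∈ I, prod x y ≠ 0) ∧
    ∀ J : Submodule F M, J ≤ I →
      (∀ x ∈ J, ∀ y ∈ I, prod x y ∈ J ∧ prod y x ∈ J) → J = ⊥ ∨ J = I

/-- The multiplication of the Drinfeld double `D(A) = A ⊕ A*` associated with the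
bilinear product `mul` and the comultiplication `Δ`:
`(a + f)(b + g) = (ab + f⇀b + a↼g) + (fg + f⇽b + a⇁g)`. -/
noncomputable def dmul {F A : Type*} [Field F] [AddCommGroup A] [Module F A]
    (mul : A →ₗ[F] A →ₗ[F] A) (Δ : A →ₗ[F] A ⊗[F] A)
    (p q : A × Module.Dual F A) : A × Module.Dual F A :=
  (mul p.1 q.1
      + TensorProduct.rid F A (LinearMap.lTensor A p.2 (Δ q.1))
      + TensorProduct.lid F A (LinearMap.rTensor A q.2 (Δ p.1)),
    Δ.dualMap (TensorProduct.dualDistrib F A A (p.2 ⊗ₜ[F] q.2))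
      + p.2.comp (mul q.1)
      + q.2.comp (mul.flip p.1))

/-- `R` is a Rota–Baxter operator of weight `lam` for the bilinear product `mul`. -/
def IsRotaBaxter {F L : Type*} [Field F] [AddCommGroup L] [Module F L]
    (mul : L →ₗ[F] L →ₗ[F] L) (R : L → L) (lam : F) : Prop :=
  ∀ x y : L, mul (R x) (R y) = R (mul (R x) y + mul x (R y) + lam • mul x y)

/-!
Since `A₁` and `A₂` are complementary ideals, `A₁ A₂ = A₂ A₁ = 0`, so the projection `π` of
`D(A)` onto `A₂` along `A₁` is multiplicative and satisfies `π(p) q = π(p) π(q) = p π(q)`.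
The hypotheses on `φᵢ` and `ψ` say exactly that `π(a, 0) = (Q a, -ψ a)`. Reading off the
`A`-components of `π(ab, 0) = π(a, 0) (b, 0) = (a, 0) π(b, 0) = π(a, 0) π(b, 0)` gives three
expansions of `Q(ab)`, whose coproduct terms cancel in `Q(Q(a) b + a Q(b) - ab)`, leaving
`Q(a) Q(b)`.
-/

section IdealDecomposition

variable {F M : Type*} [Field F] [AddCommGroup M] [Module F M] {I J : Submodule F M}

theorem IsIdealP.prod_eq_zero_of_disjoint {prod : M → M → M} (hI : IsIdealP prod I)
    (hJ : IsIdealP prod J) (hIJ : Disjoint I J) {x y : M} (hx : x ∈ I) (hy : y ∈ J) :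
    prod x y = 0 :=
  Submodule.disjoint_def.mp hIJ _ (hI x hx y).1 (hJ y hy x).2

variable {m : M →ₗ[F] M →ₗ[F] M} (hI : IsIdealP (m · ·) I) (hJ : IsIdealP (m · ·) J)
  (h : IsCompl I J)
include hI hJ

theorem IsIdealP.map₂_projection_left (x y : M) :
    m (J.projection I h.symm x) y = m (J.projection I h.symm x) (J.projection I h.symm y) := by
  conv_lhs => rw [← Submodule.projection_add_projection_eq_self h y]
  rw [map_add, hJ.prod_eq_zero_of_disjoint hI h.disjoint.symm (by simp) (by simp), zero_add]

theorem IsIdealP.map₂_projection_right (x y : M) :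
    m x (J.projection I h.symm y) = m (J.projection I h.symm x) (J.projection I h.symm y) := by
  conv_lhs => rw [← Submodule.projection_add_projection_eq_self h x]
  rw [map_add, LinearMap.add_apply,
    hI.prod_eq_zero_of_disjoint hJ h.disjoint (by simp) (by simp), zero_add]

theorem IsIdealP.projection_map₂ (x y : M) :
    J.projection I h.symm (m x y) = m (J.projection I h.symm x) (J.projection I h.symm y) := by
  conv_lhs => rw [← Submodule.projection_add_projection_eq_self h x]
  rw [map_add, LinearMap.add_apply, map_add,
    (Submodule.projection_apply_eq_zero_iff _).mpr (hI _ (by simp) y).1,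
    (Submodule.projection_eq_self_iff _ _).mpr (hJ _ (by simp) y).1, zero_add]
  exact hI.map₂_projection_left hJ h x y

end IdealDecomposition

theorem isRotaBaxter_neg_one_of_expansions {F L : Type*} [Field F] [AddCommGroup L] [Module F L]
    (mul : L →ₗ[F] L →ₗ[F] L) (Q : L →ₗ[F] L) (l r : L → L → L)
    (hl : ∀ a b, Q (mul a b) = mul (Q a) b + l a b)
    (hr : ∀ a b, Q (mul a b) = mul a (Q b) + r a b)
    (hlr : ∀ a b, Q (mul a b) = mul (Q a) (Q b) + l a (Q b) + r (Q a) b) :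
    IsRotaBaxter mul Q (-1) := by
  intro x y
  rw [map_add, map_add, neg_one_smul, map_neg, hr (Q x) y, hl x (Q y), hlr x y]
  abel

namespace DrinfeldDouble

variable {F A : Type*} [Field F] [AddCommGroup A] [Module F A]

noncomputable def dmulₗ (mul : A →ₗ[F] A →ₗ[F] A) (Δ : A →ₗ[F] A ⊗[F] A) :
    (A × Module.Dual F A) →ₗ[F] (A × Module.Dual F A) →ₗ[F] (A × Module.Dual F A) :=
  LinearMap.mk₂ F (dmul mul Δ)
    (fun p p' q => by
      simp only [dmul, Prod.fst_add, Prod.snd_add, map_add, LinearMap.add_apply,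
        LinearMap.lTensor_add, TensorProduct.add_tmul, LinearMap.add_comp, LinearMap.comp_add,
        Prod.mk_add_mk]
      congr 1 <;> abel)
    (fun c p q => by
      simp only [dmul, Prod.smul_fst, Prod.smul_snd, map_smul, LinearMap.smul_apply,
        LinearMap.lTensor_smul, ← TensorProduct.smul_tmul', LinearMap.smul_comp,
        LinearMap.comp_smul, Prod.smul_mk, smul_add])
    (fun p q q' => by
      simp only [dmul, Prod.fst_add, Prod.snd_add, map_add, LinearMap.add_apply,
        LinearMap.rTensor_add, TensorProduct.tmul_add, LinearMap.comp_add, LinearMap.add_comp,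
        Prod.mk_add_mk]
      congr 1 <;> abel)
    (fun c p q => by
      simp only [dmul, Prod.smul_fst, Prod.smul_snd, map_smul, LinearMap.smul_apply,
        LinearMap.rTensor_smul, TensorProduct.tmul_smul, LinearMap.comp_smul,
        LinearMap.smul_comp, Prod.smul_mk, smul_add])

theorem dmul_mk_zero_mk_zero (mul : A →ₗ[F] A →ₗ[F] A) (Δ : A →ₗ[F] A ⊗[F] A) (a b : A) :
    dmul mul Δ (a, 0) (b, 0) = (mul a b, 0) := by
  simp [dmul]

theorem projection_mk_zero {A₁ A₂ : Submodule F (A × Module.Dual F A)} (hcompl : IsCompl A₁ A₂)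
    {φ₁ φ₂ : Module.Dual F A →ₗ[F] A} (hφ1 : ∀ f, ((-φ₁ f, f) : A × Module.Dual F A) ∈ A₁)
    (hφ2 : ∀ f, ((-φ₂ f, f) : A × Module.Dual F A) ∈ A₂) {ψ : A →ₗ[F] Module.Dual F A}
    (hψ : ∀ c : A, c = -φ₁ (ψ c) + φ₂ (ψ c)) (z : A) :
    A₂.projection A₁ hcompl.symm (z, 0) = (φ₂ (ψ z), -ψ z) := by
  have hsplit : ((z, 0) : A × Module.Dual F A) = (-φ₁ (ψ z), ψ z) + (φ₂ (ψ z), -ψ z) := by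
    ext <;> simp [← hψ z]
  rw [hsplit, map_add, (Submodule.projection_apply_eq_zero_iff _).mpr (hφ1 _),
    (Submodule.projection_eq_self_iff _ _).mpr (by simpa using hφ2 (-ψ z)), zero_add]

end DrinfeldDouble

open DrinfeldDouble in
theorem stmt8_general {F A : Type*} [Field F] [AddCommGroup A] [Module F A]
    (mul : A →ₗ[F] A →ₗ[F] A)
    -- a comultiplication on `A`
    (Δ : A →ₗ[F] A ⊗[F] A)
    -- `D(A) = A₁ ⊕ A₂`, a direct sum of two proper simple ideals
    (A₁ A₂ : Submodule F (A × Module.Dual F A))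
    (hcompl : IsCompl A₁ A₂)
    (hid1 : IsIdealP (dmul mul Δ) A₁) (hid2 : IsIdealP (dmul mul Δ) A₂)
    -- the linear maps `φᵢ` with `f - φᵢ(f) ∈ Aᵢ` for all `f ∈ A*`
    (φ₁ φ₂ : Module.Dual F A →ₗ[F] A)
    (hφ1 : ∀ f : Module.Dual F A, ((-φ₁ f, f) : A × Module.Dual F A) ∈ A₁)
    (hφ2 : ∀ f : Module.Dual F A, ((-φ₂ f, f) : A × Module.Dual F A) ∈ A₂)
    -- the linear bijection `ψ` with `a = -φ₁(ψ a) + φ₂(ψ a)` for all `a ∈ A`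
    (ψ : A →ₗ[F] Module.Dual F A)
    (hψ : ∀ c : A, c = -φ₁ (ψ c) + φ₂ (ψ c))
    :
    IsRotaBaxter mul (fun c => φ₂ (ψ c)) (-1 : F) := by
  have hI : IsIdealP (dmulₗ mul Δ · ·) A₁ := hid1
  have hJ : IsIdealP (dmulₗ mul Δ · ·) A₂ := hid2
  have hπ : ∀ z, A₂.projection A₁ hcompl.symm (z, 0) = (φ₂ (ψ z), -ψ z) :=
    projection_mk_zero hcompl hφ1 hφ2 hψ
  have hπmul : ∀ a b, A₂.projection A₁ hcompl.symm (mul a b, 0) =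
      dmulₗ mul Δ (A₂.projection A₁ hcompl.symm (a, 0)) (A₂.projection A₁ hcompl.symm (b, 0)) := by
    intro a b
    rw [← dmul_mk_zero_mk_zero mul Δ a b]
    exact hI.projection_map₂ hJ hcompl _ _
  refine isRotaBaxter_neg_one_of_expansions mul (φ₂ ∘ₗ ψ)
    (fun a b => TensorProduct.rid F A (LinearMap.lTensor A (-ψ a) (Δ b)))
    (fun a b => TensorProduct.lid F A (LinearMap.rTensor A (-ψ b) (Δ a))) ?_ ?_ ?_
  · intro a b
    have h := congrArg Prod.fst ((hπmul a b).trans (hI.map₂_projection_left hJ hcompl _ _).symm)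
    simpa [hπ, dmulₗ, dmul] using h
  · intro a b
    have h := congrArg Prod.fst ((hπmul a b).trans (hI.map₂_projection_right hJ hcompl _ _).symm)
    simpa [hπ, dmulₗ, dmul] using h
  · intro a b
    have h := congrArg Prod.fst (hπmul a b)
    simpa [hπ, dmulₗ, dmul] using h

theorem stmt8 {F A : Type*} [Field F] [CharZero F] [AddCommGroup A] [Module F A]
    [FiniteDimensional F A] (mul : A →ₗ[F] A →ₗ[F] A)
    -- `A` is simple
    (hsimple : (∃ x y : A, mul x y ≠ 0) ∧
      ∀ I : Submodule F A, (∀ x ∈ I, ∀ y : A, mul x y ∈ I ∧ mul y x ∈ I) → I = ⊥ ∨ I = ⊤)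
    -- a comultiplication on `A`
    (Δ : A →ₗ[F] A ⊗[F] A)
    -- `D(A) = A₁ ⊕ A₂`, a direct sum of two proper simple ideals
    (A₁ A₂ : Submodule F (A × Module.Dual F A))
    (h1b : A₁ ≠ ⊥) (h1t : A₁ ≠ ⊤) (h2b : A₂ ≠ ⊥) (h2t : A₂ ≠ ⊤)
    (hcompl : IsCompl A₁ A₂)
    (hid1 : IsIdealP (dmul mul Δ) A₁) (hid2 : IsIdealP (dmul mul Δ) A₂)
    (hs1 : IsSimpleIdealP (dmul mul Δ) A₁) (hs2 : IsSimpleIdealP (dmul mul Δ) A₂)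
    -- the linear maps `φᵢ` with `f - φᵢ(f) ∈ Aᵢ` for all `f ∈ A*`
    (φ₁ φ₂ : Module.Dual F A →ₗ[F] A)
    (hφ1 : ∀ f : Module.Dual F A, ((-φ₁ f, f) : A × Module.Dual F A) ∈ A₁)
    (hφ2 : ∀ f : Module.Dual F A, ((-φ₂ f, f) : A × Module.Dual F A) ∈ A₂)
    -- the linear bijection `ψ` with `a = -φ₁(ψ a) + φ₂(ψ a)` for all `a ∈ A`
    (ψ : A →ₗ[F] Module.Dual F A) (hψbij : Function.Bijective ψ)
    (hψ : ∀ c : A, c = -φ₁ (ψ c) + φ₂ (ψ c))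
    :
    IsRotaBaxter mul (fun c => φ₂ (ψ c)) (-1 : F) :=
  stmt8_general mul Δ A₁ A₂ hcompl hid1 hid2 φ₁ φ₂ hφ1 hφ2 ψ hψ
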